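/- arXiv:1804.06677 — 2 statements merged into one kernel-verified Lean document; each statement's English description precedes it below -/
import Mathlib

section
/- The subgroup L₂(11)_A = ⟨α, β, γ⟩ of Perm(Fin 12) is isomorphic as a group to L₂(11) = PSL(2, 𝔽₁₁). -/
/-!
SL(2, 𝔽₁₁) acts on the projective line ℙ¹(𝔽₁₁), whose twelve points are labelled `0, …, 10, ∞`
as in the paper; α, β, γ are the Möbius maps `z ↦ z + 1`, `z ↦ 3z`, `z ↦ -1/z`. The kernel of
this action is the centre, so PSL(2, 𝔽₁₁) embeds into `Perm (Fin 12)`. Its image is generated by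
the images α and γ of `T = !![1, 1; 0, 1]` and `S = !![0, -1; 1, 0]`: SL(2, 𝔽ₚ) is generated by
transvections, and each of these is a power of `T` or the conjugate of one by `S`. β is the image
of the diagonal matrix `!![5, 0; 0, 9]`.
-/

open Equiv

/-- The 11-cycle (0 1 2 3 4 5 6 7 8 9 10) on `Fin 12`, fixing 11. -/
def α : Equiv.Perm (Fin 12) := c[0,1,2,3,4,5,6,7,8,9,10]

/-- The permutation (1 3 9 5 4)(2 6 7 10 8), fixing 0 and 11. -/
def β : Equiv.Perm (Fin 12) := c[1,3,9,5,4] * c[2,6,7,10,8]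

/-- The permutation (11 0)(1 10)(2 5)(3 7)(4 8)(6 9). -/
def γ : Equiv.Perm (Fin 12) := c[11,0] * c[1,10] * c[2,5] * c[3,7] * c[4,8] * c[6,9]

/-- The permutation (2 10)(3 4)(5 9)(6 7), fixing 0, 1, 8 and 11. -/
def δ : Equiv.Perm (Fin 12) := c[2,10] * c[3,4] * c[5,9] * c[6,7]

/-- L₂(11)_A, the subgroup of Perm (Fin 12) generated by α, β, γ. -/
def L2_11_A : Subgroup (Equiv.Perm (Fin 12)) := Subgroup.closure {α, β, γ}

/-- L₂(11) = PSL(2, 𝔽₁₁): the quotient of SL(2, ℤ/11ℤ) by its center. -/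
abbrev L2_11 :=
  Matrix.SpecialLinearGroup (Fin 2) (ZMod 11) ⧸
    Subgroup.center (Matrix.SpecialLinearGroup (Fin 2) (ZMod 11))

open Matrix Projectivization MulAction
open scoped LinearAlgebra.Projectivization MatrixGroups

section ProjectiveLine

variable {F : Type*} [Field F]

def projectiveLineRep : Option F → Fin 2 → F
  | none => ![1, 0]
  | some x => ![x, 1]

lemma projectiveLineRep_ne_zero (x : Option F) : projectiveLineRep x ≠ 0 := by
  cases x <;> simp [projectiveLineRep, funext_iff]

lemma mk_projectiveLineRep_injective :
    Function.Injective fun x : Option F ↦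
      mk F (projectiveLineRep x) (projectiveLineRep_ne_zero x) := by
  intro x y hxy
  obtain ⟨a, ha⟩ := (mk_eq_mk_iff' _ _ _ _ _).1 hxy
  have h0 := congrFun ha 0
  have h1 := congrFun ha 1
  cases x <;> cases y <;> simp_all [projectiveLineRep]

lemma mk_projectiveLineRep_surjective :
    Function.Surjective fun x : Option F ↦
      mk F (projectiveLineRep x) (projectiveLineRep_ne_zero x) := by
  intro p
  induction p using Projectivization.ind with | h v hv =>
  by_cases h1 : v 1 = 0
  · have h0 : v 0 ≠ 0 := fun h0 ↦ hv (funext fun i ↦ by fin_cases i <;> assumption)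
    refine ⟨none, (mk_eq_mk_iff' _ _ _ _ _).2 ⟨(v 0)⁻¹, funext fun i ↦ ?_⟩⟩
    fin_cases i <;> simp [projectiveLineRep, h0, h1]
  · refine ⟨some (v 0 / v 1), (mk_eq_mk_iff' _ _ _ _ _).2 ⟨(v 1)⁻¹, funext fun i ↦ ?_⟩⟩
    fin_cases i <;> simp [projectiveLineRep, h1, div_eq_inv_mul]

noncomputable def projectiveLineEquiv : Option F ≃ ℙ F (Fin 2 → F) :=
  .ofBijective _ ⟨mk_projectiveLineRep_injective, mk_projectiveLineRep_surjective⟩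

end ProjectiveLine

lemma Matrix.SpecialLinearGroup.transvection_natCast {ι R : Type*} [DecidableEq ι] [Fintype ι]
    [CommRing R] {i j : ι} (hij : i ≠ j) (n : ℕ) :
    transvection hij (n : R) = transvection hij 1 ^ n := by
  induction n with
  | zero => simp
  | succ n ih => rw [Nat.cast_succ, transvection_add, ih, pow_succ]

namespace Matrix.SL2

def S (R : Type*) [CommRing R] : SL(2, R) := ⟨!![0, -1; 1, 0], by simp [det_fin_two_of]⟩

lemma coe_S (R : Type*) [CommRing R] : (S R : Matrix (Fin 2) (Fin 2) R) = !![0, -1; 1, 0] :=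
  rfl

lemma S_inv_mul_transvection_mul_S {R : Type*} [CommRing R] (b : R) :
    (S R)⁻¹ * SpecialLinearGroup.transvection zero_ne_one b * S R =
      SpecialLinearGroup.transvection one_ne_zero (-b) := by
  refine Subtype.ext <| Matrix.ext fun i j ↦ ?_
  fin_cases i <;> fin_cases j <;>
    simp [coe_S, adjugate_fin_two_of, SpecialLinearGroup.transvection_coe, mul_apply, vecMul,
      dotProduct, Fin.sum_univ_two, single_apply, one_apply]

lemma closure_transvection_one_S_eq_top (p : ℕ) [Fact p.Prime] :
    Subgroup.closure {SpecialLinearGroup.transvection zero_ne_one (1 : ZMod p), S (ZMod p)} =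
      ⊤ := by
  set H := Subgroup.closure {SpecialLinearGroup.transvection zero_ne_one (1 : ZMod p), S (ZMod p)}
  have hT : SpecialLinearGroup.transvection zero_ne_one (1 : ZMod p) ∈ H :=
    Subgroup.subset_closure (by simp)
  have hS : S (ZMod p) ∈ H := Subgroup.subset_closure (by simp)
  have upper (c : ZMod p) : SpecialLinearGroup.transvection zero_ne_one c ∈ H := by
    rw [← ZMod.natCast_zmod_val c, SpecialLinearGroup.transvection_natCast]
    exact pow_mem hT _
  have lower (c : ZMod p) : SpecialLinearGroup.transvection one_ne_zero c ∈ H := by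
    rw [← neg_neg c, ← S_inv_mul_transvection_mul_S]
    exact mul_mem (mul_mem (inv_mem hS) (upper _)) hS
  refine (Subgroup.eq_top_iff' H).2 fun A ↦
    transvection_induction (· ∈ H) (fun i j hij c ↦ ?_) (fun _ _ ↦ mul_mem) A
  fin_cases i <;> fin_cases j
  · exact absurd rfl hij
  · exact upper c
  · exact lower c
  · exact absurd rfl hij

end Matrix.SL2

lemma Equiv.permCongrHom_symm_toPerm_eq_iff {G α β : Type*} [Group G] [MulAction G β]
    (e : α ≃ β) (g : G) (σ : Perm α) :
    e.symm.permCongrHom (toPerm g) = σ ↔ ∀ a, g • e a = e (σ a) := by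
  simp only [Equiv.ext_iff]
  exact forall_congr' fun a ↦ e.symm_apply_eq

instance : Fact (Nat.Prime 11) := ⟨by norm_num⟩

/-- The paper's labelling: `k ≤ 10` is the point `[k : 1]`, and `11` is `∞ = [1 : 0]`. -/
def fin12EquivOption : Fin 12 ≃ Option (ZMod 11) := finSuccEquivLast

noncomputable def fin12EquivProjectiveLine : Fin 12 ≃ ℙ (ZMod 11) (Fin 2 → ZMod 11) :=
  fin12EquivOption.trans projectiveLineEquiv

noncomputable def sl2ToPermFin12 : SL(2, ZMod 11) →* Perm (Fin 12) :=
  (fin12EquivProjectiveLine.symm.permCongrHom :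
    Perm (ℙ (ZMod 11) (Fin 2 → ZMod 11)) →* Perm (Fin 12)).comp (toPermHom _ _)

lemma sl2ToPermFin12_eq_iff (M : SL(2, ZMod 11)) (σ : Perm (Fin 12)) :
    sl2ToPermFin12 M = σ ↔ ∀ k, ∃ a : ZMod 11,
      a • projectiveLineRep (fin12EquivOption (σ k)) =
        M • projectiveLineRep (fin12EquivOption k) :=
  (Equiv.permCongrHom_symm_toPerm_eq_iff _ _ _).trans
    (forall_congr' fun _ ↦ mk_eq_mk_iff' _ _ _ _ _)

lemma sl2ToPermFin12_transvection :
    sl2ToPermFin12 (SpecialLinearGroup.transvection zero_ne_one 1) = α :=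
  (sl2ToPermFin12_eq_iff _ _).2 (by decide)

lemma sl2ToPermFin12_diag : sl2ToPermFin12 ⟨!![5, 0; 0, 9], by decide⟩ = β :=
  (sl2ToPermFin12_eq_iff _ _).2 (by decide)

lemma sl2ToPermFin12_S : sl2ToPermFin12 (SL2.S (ZMod 11)) = γ :=
  (sl2ToPermFin12_eq_iff _ _).2 (by decide)

lemma ker_sl2ToPermFin12 : sl2ToPermFin12.ker = Subgroup.center SL(2, ZMod 11) := by
  rw [sl2ToPermFin12, MonoidHom.ker_mulEquiv_comp]
  exact SL_mulAction_ker

lemma range_sl2ToPermFin12 : sl2ToPermFin12.range = L2_11_A := by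
  refine le_antisymm ?_ ((Subgroup.closure_le _).2 ?_)
  · rw [MonoidHom.range_eq_map, ← SL2.closure_transvection_one_S_eq_top, MonoidHom.map_closure,
      Set.image_pair, sl2ToPermFin12_transvection, sl2ToPermFin12_S]
    exact Subgroup.closure_mono (by simp [Set.insert_subset_iff])
  · rintro _ (rfl | rfl | rfl)
    · exact ⟨_, sl2ToPermFin12_transvection⟩
    · exact ⟨_, sl2ToPermFin12_diag⟩
    · exact ⟨_, sl2ToPermFin12_S⟩

theorem L2_11_A_iso_PSL2_11 : Nonempty (L2_11_A ≃* L2_11) :=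
  ⟨((QuotientGroup.quotientMulEquivOfEq ker_sl2ToPermFin12.symm).trans
    (QuotientGroup.quotientKerEquivRange sl2ToPermFin12) |>.trans
      (MulEquiv.subgroupCongr range_sl2ToPermFin12)).symm⟩
end

section
/- As subgroups of M₁₂, L₂(11)_A and L₂(11)_B are not conjugate to each other: for every g ∈ M₁₂, the image of L₂(11)_A under conjugation by g is not equal to L₂(11)_B. -/
/-
L₂(11)_B fixes the point ∞ = 11, whereas γ ∈ L₂(11)_A moves every point. Conjugation by any
permutation preserves having no fixed point, so no conjugate of L₂(11)_A lies in a point stabilizer.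
-/

open Equiv MulAction

/-- L₂(11)_B, the subgroup of Perm (Fin 12) generated by α, β, δ. -/
def L2_11_B : Subgroup (Equiv.Perm (Fin 12)) := Subgroup.closure {α, β, δ}

/-- M₁₂, the subgroup of Perm (Fin 12) generated by α, β, γ, δ. -/
def M12 : Subgroup (Equiv.Perm (Fin 12)) := Subgroup.closure {α, β, γ, δ}

theorem Equiv.Perm.map_conj_not_le_stabilizer {X : Type*} {K : Subgroup (Perm X)} {σ : Perm X}
    (hσK : σ ∈ K) (hσ : ∀ y, σ y ≠ y) (g : Perm X) (x : X) :
    ¬ K.map (MulAut.conj g).toMonoidHom ≤ stabilizer (Perm X) x := by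
  intro hle
  have hfix : (g * σ * g⁻¹) x = x := mem_stabilizer_iff.mp (hle ⟨σ, hσK, rfl⟩)
  apply hσ (g⁻¹ x)
  rw [Perm.mul_apply, Perm.mul_apply] at hfix
  exact Perm.eq_inv_iff_eq.mpr hfix

theorem γ_mem_L2_11_A : γ ∈ L2_11_A :=
  Subgroup.subset_closure (by simp)

theorem γ_apply_ne_self : ∀ x, γ x ≠ x := by
  decide

theorem L2_11_B_le_stabilizer : L2_11_B ≤ stabilizer (Perm (Fin 12)) (11 : Fin 12) := by
  rw [L2_11_B, Subgroup.closure_le]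
  rintro τ (rfl | rfl | rfl) <;> rw [SetLike.mem_coe, mem_stabilizer_iff] <;> decide

theorem L2_11_A_not_conjugate_to_L2_11_B :
    ∀ g : Equiv.Perm (Fin 12), g ∈ M12 →
      Subgroup.map (MulAut.conj g).toMonoidHom L2_11_A ≠ L2_11_B := by
  intro g _ hconj
  exact Perm.map_conj_not_le_stabilizer γ_mem_L2_11_A γ_apply_ne_self g 11
    (hconj ▸ L2_11_B_le_stabilizer)
end
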